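/- Let n ≥ 2, let T be a sparse 0-1 word of length n−1, and let Γ ∈ L̃(T). Then ε(Γ) + η(Γ) ≡ χ(Γ(n) > 0)·(n−1) + Σ_{h=1}^{t} r_h (mod 2), where χ(Γ(n) > 0) = 1 if Γ(n) > 0 and 0 otherwise. -/

import Mathlib

/-- `S(T)`: the set of (1-indexed) positions of the 1's of the word `T`. -/
def onesSet (T : List Bool) : Finset ℕ :=
  ((Finset.range T.length).filter (fun i => T.getD i false = true)).image (· + 1)

/-- The increasing list `s_1 < ⋯ < s_t` of positions of the 1's of `T`. -/
def sListOf (T : List Bool) : List ℕ := (onesSet T).sort (· ≤ ·)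

/-- `sfun n T j = s_j`, with the conventions `s_0 = 0` and `s_j = n` for `j > t`. -/
def sfun (n : ℕ) (T : List Bool) (j : ℕ) : ℕ :=
  if j = 0 then 0 else (sListOf T).getD (j - 1) n

/-- `tOf T = t`, the number of 1's of `T`. -/
def tOf (T : List Bool) : ℕ := (onesSet T).card

/-- `S ∩ (s_j, s_{j+1})`, the elements of `S` lying strictly between `s_j` and `s_{j+1}`. -/
def intv (n : ℕ) (T : List Bool) (S : Finset ℕ) (j : ℕ) : Finset ℕ :=
  S.filter (fun x => sfun n T j < x ∧ x < sfun n T (j + 1))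

/-- `S ∈ G(T)`: every interval `(s_j, s_{j+1})` with `0 ≤ j ≤ t-1` meets `S`, and any two
elements of `S` in a common interval `(s_j, s_{j+1})`, `0 ≤ j ≤ t`, are congruent mod 2. -/
def memG (n : ℕ) (T : List Bool) (S : Finset ℕ) : Prop :=
  (∀ j < tOf T, (intv n T S j).Nonempty) ∧
    (∀ j ≤ tOf T, ∀ x ∈ intv n T S j, ∀ y ∈ intv n T S j, x % 2 = y % 2)

/-- `sgn(S,T) = (-1)^(Σ_{j=0}^{t-1} (s_{j+1} - y_j - 1))`, with `y_j` the least element of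
`S ∩ (s_j, s_{j+1})` (any choice gives the same value when `S ∈ G(T)`). -/
noncomputable def sgnST (n : ℕ) (T : List Bool) (S : Finset ℕ) : ℚ :=
  (-1 : ℚ) ^ (∑ j ∈ Finset.range (tOf T),
    (sfun n T (j + 1) - (intv n T S j).min.untopD 0 - 1))

/-- `h_{S,T}`. -/
noncomputable def hST (n : ℕ) (T : List Bool) (S : Finset ℕ) : ℚ :=
  haveI := Classical.propDecidable (memG n T S)
  if memG n T S then sgnST n T S else 0

/-- `∂(E) = {i ∈ [m-1] : E_i ≠ E_{i+1}} ∪ {m}` for a word `E` of length `m` (1-indexed). -/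
def bnd (E : List Bool) : Finset ℕ :=
  ((Finset.Icc 1 (E.length - 1)).filter
      (fun i => E.getD (i - 1) false ≠ E.getD i false)) ∪ {E.length}

/-- A word is sparse if it does not begin with a 1 and has no two consecutive 1's. -/
def Sparse (E : List Bool) : Prop :=
  E.head? ≠ some true ∧ E.Chain' (fun a b => ¬(a = true ∧ b = true))

/-- The finset of all 0-1 words of length `n` (encoding lattice paths by their up/down steps,
`true` = up-step). -/
def allWords : ℕ → Finset (List Bool)
  | 0 => {[]}
  | n + 1 => (allWords n).image (List.cons false) ∪ (allWords n).image (List.cons true)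

/-- `pathHt w i = Γ(i)`, the height of the lattice path with step word `w` after `i` steps. -/
def pathHt (w : List Bool) (i : ℕ) : ℤ :=
  (((w.take i).map (fun b => if b then (1 : ℤ) else -1))).sum

/-- `d₊(Γ)`, the number of up-steps. -/
def dplus (w : List Bool) : ℕ := w.count true

/-- `N(Γ)`: the word of length `n-1` whose `i`-th letter is 1 iff `Γ(i) < 0`. -/
def NGamma (w : List Bool) : List Bool :=
  (List.range (w.length - 1)).map (fun i => decide (pathHt w (i + 1) < 0))

/-- Membership in `L(T)` for a step word `w` of length `n`. -/
def memL (n : ℕ) (T : List Bool) (w : List Bool) : Prop :=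
  (∀ j < tOf T, (intv n T (bnd (NGamma w)) j).card = 1) ∧
    (intv n T (bnd (NGamma w)) (tOf T)).card ≤ 2 ∧
    (∀ x ∈ intv n T (bnd (NGamma w)) (tOf T),
      n - 1 ∈ intv n T (bnd (NGamma w)) (tOf T) → x % 2 = (n - 1) % 2)

/-- `L(T)` as a finset of step words of length `n`. -/
noncomputable def pathsL (n : ℕ) (T : List Bool) : Finset (List Bool) :=
  @Finset.filter _ (memL n T) (Classical.decPred _) (allWords n)

/-- `x_h(Γ)`: the (unique, for `Γ ∈ L(T)` and `h ∈ [t]`) element of `∂(N(Γ)) ∩ (s_{h-1}, s_h)`. -/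
noncomputable def xh (n : ℕ) (T : List Bool) (w : List Bool) (h : ℕ) : ℕ :=
  (intv n T (bnd (NGamma w)) (h - 1)).min.untopD 0

/-- `ε(Γ) = Σ_{h=1}^t (s_h - x_h(Γ) - 1)`. -/
noncomputable def epsP (n : ℕ) (T : List Bool) (w : List Bool) : ℕ :=
  ∑ h ∈ Finset.Icc 1 (tOf T), (sfun n T h - xh n T w h - 1)

/-- `η(Γ) = |{j ∈ [n-1] : Γ(j) ≥ 0}|`. -/
def etaP (n : ℕ) (w : List Bool) : ℕ :=
  ((Finset.Icc 1 (n - 1)).filter (fun j => 0 ≤ pathHt w j)).card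

/-- `L₀(T) = {Γ ∈ L(T) : Γ(r_i) = 0 for some i ∈ [t]}`, where `r_i = s_i + 1`. -/
noncomputable def L0 (n : ℕ) (T : List Bool) : Finset (List Bool) :=
  @Finset.filter _ (fun w => ∃ i ∈ Finset.Icc 1 (tOf T), pathHt w (sfun n T i + 1) = 0)
    (Classical.decPred _) (pathsL n T)

/-- `L₀'(T) = {Γ ∈ L(T) : Γ(x) = 0 for some r_t ≤ x ≤ n}`. -/
noncomputable def L0' (n : ℕ) (T : List Bool) : Finset (List Bool) :=
  @Finset.filter _ (fun w => ∃ x ∈ Finset.Icc (sfun n T (tOf T) + 1) n, pathHt w x = 0)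
    (Classical.decPred _) (pathsL n T)

/-- `L̃(T)`. -/
noncomputable def Ltilde (n : ℕ) (T : List Bool) : Finset (List Bool) :=
  if Even n then pathsL n T \ (L0 n T ∪ L0' n T) else pathsL n T \ L0 n T

/-!
Modulo 2, `ε(Γ) ≡ Σ_h r_h + Σ_h x_h`, so it suffices to show `η(Γ) + Σ_h x_h ≡ χ(Γ(n) > 0)(n - 1)`.
Since `Γ(i) ≡ i (mod 2)`, a maximal stretch of times in `[1, j]` where `Γ ≥ 0` either starts at
time `1` and has even length, or starts right after an up-crossing (a step from `-1` to `0`) and has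
odd length, unless it is cut off at `j`. Hence
`η(Γ) ≡ #{up-crossings before n - 1} + χ(Γ(n - 1) ≥ 0)(n - 1)`.
The up-crossings are exactly the odd points of `∂(N(Γ))` below `n - 1`, and the conditions defining
`L̃(T)` force these to be the odd `x_h`, so their number is `≡ Σ_h x_h`. Finally
`χ(Γ(n - 1) ≥ 0)(n - 1) ≡ χ(Γ(n) > 0)(n - 1)` because `Γ(n) ≠ 0` when `n` is even.
-/

open Finset

section Paths

variable {w : List Bool} {i j m : ℕ}

@[simp] lemma pathHt_zero (w : List Bool) : pathHt w 0 = 0 := by simp [pathHt]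

lemma pathHt_succ (hi : i < w.length) :
    pathHt w (i + 1) = pathHt w i + if w[i] then 1 else -1 := by
  rw [pathHt, pathHt, List.take_add_one, List.getElem?_eq_getElem hi, Option.toList_some,
    List.map_append, List.sum_append]
  simp

lemma pathHt_succ_eq_or (hi : i < w.length) :
    pathHt w (i + 1) = pathHt w i + 1 ∨ pathHt w (i + 1) = pathHt w i - 1 := by
  rw [pathHt_succ hi]
  split <;> simp [sub_eq_add_neg]

lemma even_pathHt_add (hi : i ≤ w.length) : Even (pathHt w i + i) := by
  induction i with
  | zero => simp
  | succ i ih =>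
    obtain ⟨c, hc⟩ := ih (by omega)
    rcases pathHt_succ_eq_or (w := w) (i := i) (by omega) with h | h <;> rw [h]
    · exact ⟨c + 1, by push_cast; linarith⟩
    · exact ⟨c, by push_cast; linarith⟩

lemma even_of_pathHt_eq_zero (hi : i ≤ w.length) (h : pathHt w i = 0) : Even i := by
  simpa [h] using even_pathHt_add hi

def upCrossings (w : List Bool) (m : ℕ) : Finset ℕ :=
  (range m).filter fun i => pathHt w i < 0 ∧ 0 ≤ pathHt w (i + 1)

lemma pathHt_succ_eq_zero_of_mem_upCrossings (hm : m ≤ w.length) (hi : i ∈ upCrossings w m) :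
    pathHt w (i + 1) = 0 := by
  simp only [upCrossings, mem_filter, mem_range] at hi
  rcases pathHt_succ_eq_or (w := w) (i := i) (by omega) with h | h <;> omega

/-- A down-step can change the sign only from height `0`, hence only at an even time. -/
lemma upCrossing_iff (hi : i < w.length) :
    (pathHt w i < 0 ∧ 0 ≤ pathHt w (i + 1)) ↔
      Odd i ∧ ¬(pathHt w i < 0 ↔ pathHt w (i + 1) < 0) := by
  rcases pathHt_succ_eq_or hi with h | h
  · refine ⟨fun ⟨hneg, hnn⟩ => ⟨?_, by omega⟩, fun ⟨_, hc⟩ => by omega⟩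
    have := even_of_pathHt_eq_zero hi (by omega : pathHt w (i + 1) = 0)
    simpa [Nat.even_add_one] using this
  · refine ⟨fun ⟨hneg, hnn⟩ => by omega, fun ⟨hodd, hc⟩ => ?_⟩
    have := even_of_pathHt_eq_zero hi.le (by omega : pathHt w i = 0)
    exact absurd this (Nat.not_even_iff_odd.mpr hodd)

lemma natCast_card_pathHt_nonneg (hj : j ≤ w.length) :
    (#{i ∈ Icc 1 j | 0 ≤ pathHt w i} : ZMod 2) =
      #(upCrossings w j) + if 0 ≤ pathHt w j then (j : ZMod 2) else 0 := by
  induction j with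
  | zero => simp [upCrossings]
  | succ j ih =>
    have hIcc : #{i ∈ Icc 1 (j + 1) | 0 ≤ pathHt w i} =
        #{i ∈ Icc 1 j | 0 ≤ pathHt w i} + if 0 ≤ pathHt w (j + 1) then 1 else 0 := by
      rw [card_filter, card_filter, sum_Icc_succ_top (by omega)]
    have hup : #(upCrossings w (j + 1)) = #(upCrossings w j) +
        if pathHt w j < 0 ∧ 0 ≤ pathHt w (j + 1) then 1 else 0 := by
      rw [upCrossings, upCrossings, card_filter, card_filter, sum_range_succ]
    rw [hIcc, hup]
    push_cast
    rw [ih (by omega)]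
    have hstep := pathHt_succ_eq_or (w := w) (i := j) hj
    by_cases hA : 0 ≤ pathHt w j <;> by_cases hB : 0 ≤ pathHt w (j + 1)
    · simp [hA, hB, not_lt.mpr hA, add_assoc]
    · have : (j : ZMod 2) = 0 :=
        (even_of_pathHt_eq_zero (w := w) (by omega) (by omega)).natCast_zmod_two
      simp [hA, hB, this]
    · have : ((j + 1 : ℕ) : ZMod 2) = 0 :=
        (even_of_pathHt_eq_zero (w := w) hj (by omega)).natCast_zmod_two
      push_cast at this
      simp [hA, hB, lt_of_not_ge hA, this]
    · simp [hA, hB]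

lemma mem_bnd_NGamma_iff (hi : 1 ≤ i) (hi' : i + 1 < w.length) :
    i ∈ bnd (NGamma w) ↔ ¬(pathHt w i < 0 ↔ pathHt w (i + 1) < 0) := by
  have hi'' : i - 1 + 1 = i := by omega
  simp [bnd, NGamma, List.getD_eq_getElem?_getD, hi'', show i ≤ w.length - 1 - 1 by omega,
    show i - 1 < w.length - 1 by omega, show i < w.length - 1 by omega, hi]
  omega

lemma mem_upCrossings_iff {n : ℕ} (hlen : w.length = n) :
    i ∈ upCrossings w (n - 1) ↔ i ∈ bnd (NGamma w) ∧ Odd i ∧ i < n - 1 := by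
  rcases Nat.eq_zero_or_pos i with rfl | hi
  · simp [upCrossings]
  by_cases hin : i < n - 1
  · simp only [upCrossings, mem_filter, mem_range, hin, true_and, and_true,
      mem_bnd_NGamma_iff hi (by omega : i + 1 < w.length)]
    exact (upCrossing_iff (by omega)).trans and_comm
  · simp [upCrossings, hin]

end Paths

section Breakpoints

variable {n : ℕ} {T : List Bool}

lemma onesSet_subset_Icc (T : List Bool) : onesSet T ⊆ Icc 1 T.length := by
  intro x hx
  simp only [onesSet, mem_image, mem_filter, mem_range] at hx
  obtain ⟨i, ⟨hi, -⟩, rfl⟩ := hx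
  simp only [mem_Icc]
  omega

lemma length_sListOf (T : List Bool) : (sListOf T).length = tOf T := length_sort _

lemma sfun_eq_getElem {h : ℕ} (h1 : 1 ≤ h) (h2 : h ≤ tOf T) :
    sfun n T h = (sListOf T)[h - 1]'(by rw [length_sListOf]; omega) := by
  rw [sfun, if_neg (by omega), List.getD_eq_getElem]

lemma sfun_mem_Icc {h : ℕ} (h1 : 1 ≤ h) (h2 : h ≤ tOf T) : sfun n T h ∈ Icc 1 T.length := by
  rw [sfun_eq_getElem h1 h2]
  exact onesSet_subset_Icc T ((mem_sort _).mp (List.getElem_mem _))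

lemma sfun_le_length {h : ℕ} (h2 : h ≤ tOf T) : sfun n T h ≤ T.length := by
  rcases Nat.eq_zero_or_pos h with rfl | h1
  · simp [sfun]
  · exact (mem_Icc.mp (sfun_mem_Icc h1 h2)).2

lemma sfun_of_tOf_lt {j : ℕ} (hj : tOf T < j) : sfun n T j = n := by
  rw [sfun, if_neg (by omega), List.getD_eq_default _ _ (by rw [length_sListOf]; omega)]

lemma sfun_strictMonoOn : StrictMonoOn (sfun n T) (Set.Iic (tOf T)) := by
  intro a ha b hb hab
  simp only [Set.mem_Iic] at ha hb
  rcases Nat.eq_zero_or_pos a with rfl | ha1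
  · exact (mem_Icc.mp (sfun_mem_Icc (by omega) hb)).1
  · rw [sfun_eq_getElem ha1 ha, sfun_eq_getElem (by omega) hb]
    exact (sortedLT_sort _).strictMono_get (show (⟨a - 1, _⟩ : Fin _) < ⟨b - 1, _⟩ by
      simp only [Fin.mk_lt_mk]; omega)

lemma eq_sfun_or_mem_gap {i : ℕ} (hi : 0 < i) (hin : i < n) :
    (∃ h ∈ Icc 1 (tOf T), i = sfun n T h) ∨
      ∃ j ≤ tOf T, sfun n T j < i ∧ i < sfun n T (j + 1) := by
  set H := Nat.findGreatest (fun h => sfun n T h ≤ i) (tOf T)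
  have hHt : H ≤ tOf T := Nat.findGreatest_le _
  have hH : sfun n T H ≤ i := Nat.findGreatest_spec (P := fun h => sfun n T h ≤ i)
    (Nat.zero_le _) (by simp [sfun])
  rcases hH.eq_or_lt with heq | hlt
  · refine .inl ⟨H, mem_Icc.mpr ⟨Nat.pos_of_ne_zero ?_, hHt⟩, heq.symm⟩
    rintro h0
    simp [h0, sfun] at heq
    omega
  · refine .inr ⟨H, hHt, hlt, ?_⟩
    rcases hHt.eq_or_lt with hHt | hHt
    · rwa [hHt, sfun_of_tOf_lt (Nat.lt_succ_self _)]
    · exact not_le.mp (Nat.findGreatest_is_greatest (P := fun h => sfun n T h ≤ i)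
        (Nat.lt_succ_self H) hHt)

end Breakpoints

lemma length_of_mem_allWords {w : List Bool} : ∀ {n : ℕ}, w ∈ allWords n → w.length = n
  | 0, h => by simp_all [allWords]
  | n + 1, h => by
    simp only [allWords, mem_union, mem_image] at h
    rcases h with ⟨v, hv, rfl⟩ | ⟨v, hv, rfl⟩ <;> simp [length_of_mem_allWords hv]

section Gaps

variable {n : ℕ} {T w : List Bool}

lemma of_mem_Ltilde (hw : w ∈ Ltilde n T) :
    w.length = n ∧ memL n T w ∧ (∀ h ∈ Icc 1 (tOf T), pathHt w (sfun n T h + 1) ≠ 0) ∧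
      (Even n → ∀ x ∈ Icc (sfun n T (tOf T) + 1) n, pathHt w x ≠ 0) := by
  unfold Ltilde at hw
  split_ifs at hw with hn
  · simp only [pathsL, L0, L0', mem_sdiff, mem_union, mem_filter] at hw
    exact ⟨length_of_mem_allWords hw.1.1, hw.1.2, fun h hh h0 => hw.2 (.inl ⟨hw.1, h, hh, h0⟩),
      fun _ x hx h0 => hw.2 (.inr ⟨hw.1, x, hx, h0⟩)⟩
  · simp only [pathsL, L0, mem_sdiff, mem_filter] at hw
    exact ⟨length_of_mem_allWords hw.1.1, hw.1.2, fun h hh h0 => hw.2 ⟨hw.1, h, hh, h0⟩,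
      fun he => absurd he hn⟩

lemma intv_eq_singleton_xh (hL : memL n T w) {h : ℕ} (h1 : 1 ≤ h) (h2 : h ≤ tOf T) :
    intv n T (bnd (NGamma w)) (h - 1) = {xh n T w h} := by
  obtain ⟨x, hx⟩ := card_eq_one.mp (hL.1 (h - 1) (by omega))
  rw [xh, hx, min_singleton]
  rfl

lemma xh_mem_intv (hL : memL n T w) {h : ℕ} (h1 : 1 ≤ h) (h2 : h ≤ tOf T) :
    xh n T w h ∈ bnd (NGamma w) ∧ sfun n T (h - 1) < xh n T w h ∧ xh n T w h < sfun n T h := by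
  have := intv_eq_singleton_xh hL h1 h2 ▸ mem_singleton_self (xh n T w h)
  simpa [intv, Nat.sub_add_cancel h1] using this

lemma xh_strictMonoOn (hL : memL n T w) : StrictMonoOn (xh n T w) (Set.Icc 1 (tOf T)) := by
  intro a ⟨ha1, ha2⟩ b ⟨hb1, hb2⟩ hab
  have hs : sfun n T a ≤ sfun n T (b - 1) :=
    sfun_strictMonoOn.monotoneOn (Set.mem_Iic.mpr ha2) (Set.mem_Iic.mpr (by omega)) (by omega)
  have := (xh_mem_intv hL ha1 ha2).2.2
  have := (xh_mem_intv hL hb1 hb2).2.1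
  omega

lemma xh_mem_upCrossings (hT : T.length = n - 1) (hlen : w.length = n) (hL : memL n T w)
    {h : ℕ} (hh : h ∈ Icc 1 (tOf T)) (hodd : Odd (xh n T w h)) :
    xh n T w h ∈ upCrossings w (n - 1) := by
  obtain ⟨h1, h2⟩ := mem_Icc.mp hh
  obtain ⟨hbnd, -, hlt⟩ := xh_mem_intv hL h1 h2
  have := sfun_le_length (n := n) h2
  exact (mem_upCrossings_iff hlen).mpr ⟨hbnd, hodd, by omega⟩

/-- The only up-crossings are at odd `x_h`: one at a breakpoint `s_h` would give `Γ(r_h) = 0`,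
and one in the last gap would, by the parity condition of `L(T)`, force `n` even and then
`Γ` would vanish after `r_t`. -/
lemma exists_xh_eq_of_mem_upCrossings (hlen : w.length = n) (hL : memL n T w)
    (hL0 : ∀ h ∈ Icc 1 (tOf T), pathHt w (sfun n T h + 1) ≠ 0)
    (hL0' : Even n → ∀ x ∈ Icc (sfun n T (tOf T) + 1) n, pathHt w x ≠ 0)
    {b : ℕ} (hb : b ∈ upCrossings w (n - 1)) :
    ∃ h ∈ Icc 1 (tOf T), Odd (xh n T w h) ∧ xh n T w h = b := by
  have hb0 := pathHt_succ_eq_zero_of_mem_upCrossings (by omega) hb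
  obtain ⟨hbnd, hodd, hbn⟩ := (mem_upCrossings_iff hlen).mp hb
  rcases eq_sfun_or_mem_gap (n := n) (T := T) hodd.pos (by omega : b < n) with
    ⟨h, hh, rfl⟩ | ⟨j, hj, hlo, hhi⟩
  · exact absurd hb0 (hL0 h hh)
  rcases hj.lt_or_eq with hj | rfl
  · have hx : b ∈ intv n T (bnd (NGamma w)) (j + 1 - 1) := by simp [intv, hbnd, hlo, hhi]
    rw [intv_eq_singleton_xh hL (by omega) hj, mem_singleton] at hx
    exact ⟨j + 1, mem_Icc.mpr ⟨by omega, hj⟩, hx ▸ hodd, hx.symm⟩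
  · have hlast : sfun n T (tOf T + 1) = n := sfun_of_tOf_lt (Nat.lt_succ_self _)
    have htop : n - 1 ∈ bnd (NGamma w) := by simp [bnd, NGamma, hlen]
    have hpar := hL.2.2 b (by simp [intv, hbnd, hlo, hlast]; omega)
      (by simp [intv, htop, hlast]; omega)
    have heven : Even n := by rw [Nat.even_iff]; rw [Nat.odd_iff] at hodd; omega
    exact absurd hb0 (hL0' heven (b + 1) (mem_Icc.mpr ⟨by omega, by omega⟩))

lemma upCrossings_eq_image_xh (hT : T.length = n - 1) (hlen : w.length = n) (hL : memL n T w)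
    (hL0 : ∀ h ∈ Icc 1 (tOf T), pathHt w (sfun n T h + 1) ≠ 0)
    (hL0' : Even n → ∀ x ∈ Icc (sfun n T (tOf T) + 1) n, pathHt w x ≠ 0) :
    upCrossings w (n - 1) = {h ∈ Icc 1 (tOf T) | Odd (xh n T w h)}.image (xh n T w) := by
  ext b
  simp only [mem_image, mem_filter]
  constructor
  · intro hb
    obtain ⟨h, hh, hodd, rfl⟩ := exists_xh_eq_of_mem_upCrossings hlen hL hL0 hL0' hb
    exact ⟨h, ⟨hh, hodd⟩, rfl⟩
  · rintro ⟨h, ⟨hh, hodd⟩, rfl⟩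
    exact xh_mem_upCrossings hT hlen hL hh hodd

lemma natCast_epsP (hL : memL n T w) :
    (epsP n T w : ZMod 2) = ∑ h ∈ Icc 1 (tOf T), ((sfun n T h + 1 : ℕ) : ZMod 2) +
      ∑ h ∈ Icc 1 (tOf T), (xh n T w h : ZMod 2) := by
  rw [epsP, Nat.cast_sum, ← sum_add_distrib]
  refine sum_congr rfl fun h hh => ?_
  obtain ⟨h1, h2⟩ := mem_Icc.mp hh
  rw [Nat.sub_sub, Nat.cast_sub (xh_mem_intv hL h1 h2).2.2, CharTwo.sub_eq_add]
  push_cast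
  ring

end Gaps

lemma sum_natCast_zmod_two_eq_card_odd {ι : Type*} (s : Finset ι) (f : ι → ℕ) :
    ∑ i ∈ s, (f i : ZMod 2) = #{i ∈ s | Odd (f i)} := by
  rw [card_filter, Nat.cast_sum]
  refine sum_congr rfl fun i _ => ?_
  split_ifs with h
  · simpa using h.natCast_zmod_two
  · simpa using (Nat.not_odd_iff_even.mp h).natCast_zmod_two

/-- For even `n`, neither `Γ(n - 1)` (odd time) nor `Γ(n)` vanishes, so they have the same sign. -/
lemma ite_nonneg_pred_eq_ite_pos {w : List Bool} {n : ℕ} (hlen : w.length = n)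
    (hΓn : Even n → pathHt w n ≠ 0) :
    (if 0 ≤ pathHt w (n - 1) then ((n - 1 : ℕ) : ZMod 2) else 0) =
      if 0 < pathHt w n then ((n - 1 : ℕ) : ZMod 2) else 0 := by
  by_cases he : Even n
  · have hpos : 0 < n := Nat.pos_of_ne_zero fun h0 => hΓn he (by simp [h0])
    have hpred : pathHt w (n - 1) ≠ 0 := fun h0 => by
      have := even_of_pathHt_eq_zero (by omega) h0
      rw [Nat.even_iff] at this he
      omega
    have hstep := pathHt_succ_eq_or (w := w) (i := n - 1) (by omega)
    rw [Nat.sub_add_cancel hpos] at hstep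
    have := hΓn he
    simp only [show 0 ≤ pathHt w (n - 1) ↔ 0 < pathHt w n by omega]
  · have : ((n - 1 : ℕ) : ZMod 2) = 0 := Even.natCast_zmod_two <| by
      rw [Nat.even_iff] at he ⊢
      omega
    simp [this]

theorem epsP_add_etaP_mod_two_general (n : ℕ) (hn : 2 ≤ n) (T : List Bool)
    (hT : T.length = n - 1) (w : List Bool) (hw : w ∈ Ltilde n T) :
    (epsP n T w + etaP n w) % 2 =
      ((if 0 < pathHt w n then n - 1 else 0) +
        ∑ h ∈ Finset.Icc 1 (tOf T), (sfun n T h + 1)) % 2 := by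
  obtain ⟨hlen, hL, hL0, hL0'⟩ := of_mem_Ltilde hw
  have hΓn : Even n → pathHt w n ≠ 0 := fun he =>
    hL0' he n (mem_Icc.mpr ⟨by have := sfun_le_length (n := n) (le_refl (tOf T)); omega, le_rfl⟩)
  have hcross : #(upCrossings w (n - 1)) = #{h ∈ Icc 1 (tOf T) | Odd (xh n T w h)} := by
    rw [upCrossings_eq_image_xh hT hlen hL hL0 hL0']
    exact card_image_of_injOn ((xh_strictMonoOn hL).injOn.mono fun h hh => by
      simpa using (mem_filter.mp hh).1)
  rw [← ZMod.natCast_eq_natCast_iff']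
  calc ((epsP n T w + etaP n w : ℕ) : ZMod 2)
      = ∑ h ∈ Icc 1 (tOf T), ((sfun n T h + 1 : ℕ) : ZMod 2) +
          (∑ h ∈ Icc 1 (tOf T), (xh n T w h : ZMod 2) +
            ∑ h ∈ Icc 1 (tOf T), (xh n T w h : ZMod 2)) +
          if 0 ≤ pathHt w (n - 1) then ((n - 1 : ℕ) : ZMod 2) else 0 := by
        rw [Nat.cast_add, natCast_epsP hL, etaP, natCast_card_pathHt_nonneg (by omega), hcross,
          ← sum_natCast_zmod_two_eq_card_odd]
        ring
    _ = _ := by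
      rw [CharTwo.add_self_eq_zero, add_zero, ite_nonneg_pred_eq_ite_pos hlen hΓn]
      push_cast
      ring

theorem epsP_add_etaP_mod_two (n : ℕ) (hn : 2 ≤ n) (T : List Bool)
    (hT : T.length = n - 1) (hTs : Sparse T) (w : List Bool) (hw : w ∈ Ltilde n T) :
    (epsP n T w + etaP n w) % 2 =
      ((if 0 < pathHt w n then n - 1 else 0) +
        ∑ h ∈ Finset.Icc 1 (tOf T), (sfun n T h + 1)) % 2 :=
  epsP_add_etaP_mod_two_general n hn T hT w hw
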